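/- Let A be a C*-algebra and let a, b ∈ A be regular elements such that ab is regular. Set p = bb†, q = a†(a†)*, r = bb*, s = a†a. Then (ab)† = b†a† if and only if pqps = pq and psrs = rs. -/
import Mathlib

/-- `x` satisfies the four Moore-Penrose equations for `a`. -/
def IsMPInv {A : Type*} [NonUnitalNormedRing A] [StarRing A] [CStarRing A] (a x : A) : Prop :=
  a * x * a = a ∧ x * a * x = x ∧ star (a * x) = a * x ∧ star (x * a) = x * a

section MPAux

set_option linter.unusedSectionVars false

variable {A : Type*} [NonUnitalNormedRing A] [StarRing A] [CStarRing A]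

theorem selfadj_of_mul_star {x : A} (h : x * star x = x) : star x = x := by
  conv_lhs => rw [← h, star_mul, star_star, h]

theorem selfadj_of_mul_star' {y : A} (h : y * star y = star y) : star y = y := by
  have h2 : y * star y = y := by
    conv_rhs => rw [← star_star y, ← h, star_mul, star_star]
  rw [← h, h2]


/-- Uniqueness of the Moore-Penrose inverse. -/
theorem mp_unique {g x y : A} (hx : IsMPInv g x) (hy : IsMPInv g y) : x = y := by
  obtain ⟨hx1, hx2, hx3, hx4⟩ := hx
  obtain ⟨hy1, hy2, hy3, hy4⟩ := hy
  have h1 : g * x = g * y := by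
    calc g * x = star (g * x) := hx3.symm
      _ = star x * star g := by rw [star_mul]
      _ = star x * star (g * y * g) := by rw [hy1]
      _ = star x * (star g * star (g * y)) := by rw [star_mul (g * y) g]
      _ = star x * (star g * (g * y)) := by rw [hy3]
      _ = (star x * star g) * (g * y) := by rw [mul_assoc]
      _ = star (g * x) * (g * y) := by rw [star_mul]
      _ = (g * x) * (g * y) := by rw [hx3]
      _ = (g * x * g) * y := by noncomm_ring
      _ = g * y := by rw [hx1]
  have h2 : x * g = y * g := by
    calc x * g = x * (g * y * g) := by rw [hy1]
      _ = (x * g) * (y * g) := by noncomm_ring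
      _ = star (x * g) * star (y * g) := by rw [hx4, hy4]
      _ = star ((y * g) * (x * g)) := (star_mul _ _).symm
      _ = star (y * (g * x * g)) := by rw [show (y * g) * (x * g) = y * (g * x * g) by noncomm_ring]
      _ = star (y * g) := by rw [hx1]
      _ = y * g := hy4
  calc x = x * g * x := hx2.symm
    _ = x * (g * x) := by rw [mul_assoc]
    _ = x * (g * y) := by rw [h1]
    _ = (x * g) * y := by rw [mul_assoc]
    _ = (y * g) * y := by rw [h2]
    _ = y := hy2

theorem key {a b ad bd : A} (ha : IsMPInv a ad) (hb : IsMPInv b bd) :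
    IsMPInv (a * b) (bd * ad) ↔
      (b * bd * (ad * star ad) * (b * bd) * (ad * a) = b * bd * (ad * star ad) ∧
       b * bd * (ad * a) * (b * star b) * (ad * a) = b * star b * (ad * a)) := by
  obtain ⟨ha1, ha2, ha3, ha4⟩ := ha
  obtain ⟨hb1, hb2, hb3, hb4⟩ := hb
  -- toolkit
  have hT1b : a * (ad * a) = a := by rw [← mul_assoc, ha1]
  have hT1 : ∀ x : A, a * (ad * (a * x)) = a * x := fun x => by
    rw [← mul_assoc, ← mul_assoc, ha1]
  have hT2b : ad * (a * ad) = ad := by rw [← mul_assoc, ha2]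
  have hT2 : ∀ x : A, ad * (a * (ad * x)) = ad * x := fun x => by
    rw [← mul_assoc, ← mul_assoc, ha2]
  have hT3b : star ad * star a = a * ad := by rw [← star_mul, ha3]
  have hT3 : ∀ x : A, star ad * (star a * x) = a * (ad * x) := fun x => by
    rw [← mul_assoc, hT3b, mul_assoc]
  have hT4b : star a * star ad = ad * a := by rw [← star_mul, ha4]
  have hT4 : ∀ x : A, star a * (star ad * x) = ad * (a * x) := fun x => by
    rw [← mul_assoc, hT4b, mul_assoc]
  have hB1b : b * (bd * b) = b := by rw [← mul_assoc, hb1]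
  have hB1 : ∀ x : A, b * (bd * (b * x)) = b * x := fun x => by
    rw [← mul_assoc, ← mul_assoc, hb1]
  have hB2b : bd * (b * bd) = bd := by rw [← mul_assoc, hb2]
  have hB2 : ∀ x : A, bd * (b * (bd * x)) = bd * x := fun x => by
    rw [← mul_assoc, ← mul_assoc, hb2]
  have hB3b : star bd * star b = b * bd := by rw [← star_mul, hb3]
  have hB3 : ∀ x : A, star bd * (star b * x) = b * (bd * x) := fun x => by
    rw [← mul_assoc, hB3b, mul_assoc]
  have hB4b : star b * star bd = bd * b := by rw [← star_mul, hb4]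
  have hB4 : ∀ x : A, star b * (star bd * x) = bd * (b * x) := fun x => by
    rw [← mul_assoc, hB4b, mul_assoc]
  have hD2b : ad * (a * star a) = star a := by
    calc ad * (a * star a) = (ad * a) * star a := (mul_assoc _ _ _).symm
      _ = star (ad * a) * star a := by rw [ha4]
      _ = star (a * (ad * a)) := by rw [← star_mul]
      _ = star a := by rw [hT1b]
  have hD2 : ∀ x : A, ad * (a * (star a * x)) = star a * x := fun x => by
    rw [show ad * (a * (star a * x)) = (ad * (a * star a)) * x by noncomm_ring, hD2b]
  have hE2b : bd * (b * star b) = star b := by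
    calc bd * (b * star b) = (bd * b) * star b := (mul_assoc _ _ _).symm
      _ = star (bd * b) * star b := by rw [hb4]
      _ = star (b * (bd * b)) := by rw [← star_mul]
      _ = star b := by rw [hB1b]
  have hE2 : ∀ x : A, bd * (b * (star b * x)) = star b * x := fun x => by
    rw [show bd * (b * (star b * x)) = (bd * (b * star b)) * x by noncomm_ring, hE2b]
  constructor
  · -- forward: MP inverse implies the two conditions
    rintro ⟨m1, m2, m3, m4⟩
    have P2 : b * bd * (ad * a) * (b * bd) * (ad * star ad) = b * bd * (ad * star ad) := by
      calc b * bd * (ad * a) * (b * bd) * (ad * star ad)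
          = b * ((bd * ad * (a * b) * (bd * ad)) * star ad) := by simp only [mul_assoc]
        _ = b * ((bd * ad) * star ad) := by rw [m2]
        _ = b * bd * (ad * star ad) := by simp only [mul_assoc]
    have P4 : ad * star ad * (b * bd) * (ad * a) = ad * a * (b * bd) * (ad * star ad) := by
      calc ad * star ad * (b * bd) * (ad * a)
          = ad * (star (a * b * (bd * ad)) * star ad) := by
            simp only [mul_assoc, star_mul, star_star, hB3, hB3b, hT4, hT4b]
        _ = ad * ((a * b * (bd * ad)) * star ad) := by rw [m3]
        _ = ad * a * (b * bd) * (ad * star ad) := by simp only [mul_assoc]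
    refine ⟨?_, ?_⟩
    · calc b * bd * (ad * star ad) * (b * bd) * (ad * a)
          = b * (bd * (ad * star ad * (b * bd) * (ad * a))) := by simp only [mul_assoc]
        _ = b * (bd * (ad * a * (b * bd) * (ad * star ad))) := by rw [P4]
        _ = b * bd * (ad * a) * (b * bd) * (ad * star ad) := by simp only [mul_assoc]
        _ = b * bd * (ad * star ad) := P2
    · have m1' : ad * (a * b * (bd * ad) * (a * b)) = ad * (a * b) := by rw [m1]
      have m1s : star b * (ad * (a * (b * (bd * (ad * a))))) = star b * (ad * a) := by
        have h := congrArg star m1'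
        simp only [star_mul, star_star, mul_assoc, hT4, hT4b, hB3, hB3b] at h
        exact h
      calc b * bd * (ad * a) * (b * star b) * (ad * a)
          = b * ((bd * ad * (a * b)) * (star b * (ad * a))) := by simp only [mul_assoc]
        _ = b * (star (bd * ad * (a * b)) * (star b * (ad * a))) := by rw [m4]
        _ = b * (star b * (ad * (a * (b * (bd * (ad * a)))))) := by
            simp only [mul_assoc, star_mul, star_star, hT4, hT4b, hB3, hB3b]
        _ = b * (star b * (ad * a)) := by rw [m1s]
        _ = b * star b * (ad * a) := by simp only [mul_assoc]
  · -- backward: the two conditions imply MP inverse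
    rintro ⟨hc1, hc2⟩
    -- X := a*b*(bd*ad) satisfies X * star X = X
    have F1 : (a * b * (bd * ad)) * star (a * b * (bd * ad)) = a * b * (bd * ad) := by
      calc (a * b * (bd * ad)) * star (a * b * (bd * ad))
          = a * ((b * bd * (ad * star ad) * (b * bd) * (ad * a)) * star a) := by
            simp only [mul_assoc, star_mul, star_star, hB3, hB3b, hD2, hD2b]
        _ = a * ((b * bd * (ad * star ad)) * star a) := by rw [hc1]
        _ = a * b * (bd * ad) := by
            simp only [mul_assoc, hT3, hT3b, hT2, hT2b]
    have F2 := selfadj_of_mul_star F1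
    -- Y := bd*ad*(a*b) satisfies Y * star Y = star Y
    have FY1 : (bd * ad * (a * b)) * star (bd * ad * (a * b)) = star (bd * ad * (a * b)) := by
      calc (bd * ad * (a * b)) * star (bd * ad * (a * b))
          = bd * ((b * bd * (ad * a) * (b * star b) * (ad * a)) * star bd) := by
            simp only [mul_assoc, star_mul, star_star, hT4, hT4b, hB2, hB2b]
        _ = bd * ((b * star b * (ad * a)) * star bd) := by rw [hc2]
        _ = star (bd * ad * (a * b)) := by
            simp only [mul_assoc, star_mul, star_star, hT4, hT4b, hE2, hE2b]
    have FY2 := selfadj_of_mul_star' FY1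
    have FY3 : (bd * ad * (a * b)) * (bd * ad * (a * b)) = bd * ad * (a * b) := by
      calc (bd * ad * (a * b)) * (bd * ad * (a * b))
          = (bd * ad * (a * b)) * star (bd * ad * (a * b)) := by rw [FY2]
        _ = star (bd * ad * (a * b)) := FY1
        _ = bd * ad * (a * b) := FY2
    have e2 : (a * b * (bd * ad) * (a * b)) * star (a * b) = (a * b) * star (a * b) := by
      calc (a * b * (bd * ad) * (a * b)) * star (a * b)
          = a * ((b * bd * (ad * a) * (b * star b) * (ad * a)) * star a) := by
            simp only [mul_assoc, star_mul, star_star, hD2, hD2b]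
        _ = a * ((b * star b * (ad * a)) * star a) := by rw [hc2]
        _ = (a * b) * star (a * b) := by
            simp only [mul_assoc, star_mul, star_star, hD2, hD2b]
    have e3 : (a * b) * star (a * b * (bd * ad) * (a * b)) = (a * b) * star (a * b) := by
      have h := congrArg star e2
      simp only [star_mul, star_star, mul_assoc] at h ⊢
      exact h
    have e1 : (a * b * (bd * ad) * (a * b)) * star (a * b * (bd * ad) * (a * b))
        = (a * b) * star (a * b) := by
      have hE : a * b * (bd * ad) * (a * b) = (a * b) * (bd * ad * (a * b)) := by
        simp only [mul_assoc]
      rw [hE, star_mul, FY2]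
      calc ((a * b) * (bd * ad * (a * b))) * ((bd * ad * (a * b)) * star (a * b))
          = ((a * b) * ((bd * ad * (a * b)) * (bd * ad * (a * b)))) * star (a * b) := by
            noncomm_ring
        _ = ((a * b) * (bd * ad * (a * b))) * star (a * b) := by rw [FY3]
        _ = (a * b * (bd * ad) * (a * b)) * star (a * b) := by rw [← hE]
        _ = (a * b) * star (a * b) := e2
    have hz : ((a * b * (bd * ad) * (a * b)) - a * b) * star ((a * b * (bd * ad) * (a * b)) - a * b) = 0 := by
      rw [star_sub, mul_sub, sub_mul, sub_mul, e1, e2, e3]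
      simp
    have h0 := (CStarRing.mul_star_self_eq_zero_iff _).mp hz
    have Eq1 : a * b * (bd * ad) * (a * b) = a * b := sub_eq_zero.mp h0
    refine ⟨Eq1, ?_, F2, FY2⟩
    -- second MP equation
    calc bd * ad * (a * b) * (bd * ad)
        = (bd * ad) * (a * b * (bd * ad)) := by simp only [mul_assoc]
      _ = (bd * ad) * star (a * b * (bd * ad)) := by rw [F2]
      _ = bd * ((b * bd * (ad * star ad) * (b * bd) * (ad * a)) * star a) := by
          simp only [mul_assoc, star_mul, star_star, hB3, hB3b, hB2, hB2b, hD2, hD2b]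
      _ = bd * ((b * bd * (ad * star ad)) * star a) := by rw [hc1]
      _ = bd * ad := by
          simp only [mul_assoc, hB2, hB2b, hT3, hT3b, hT2, hT2b]

end MPAux

theorem stmt_13 {A : Type*} [NonUnitalNormedRing A] [StarRing A] [CStarRing A]
    (a b ad bd abd p q r s : A)
    (ha : IsMPInv a ad) (hb : IsMPInv b bd) (hab : IsMPInv (a * b) abd)
    (hp : p = b * bd) (hq : q = ad * star ad) (hr : r = b * star b) (hs : s = ad * a) :
    abd = bd * ad ↔ (p * q * p * s = p * q ∧ p * s * r * s = r * s) := by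
  subst hp hq hr hs
  constructor
  · rintro rfl
    exact (key ha hb).mp hab
  · intro h
    exact mp_unique hab ((key ha hb).mpr h)
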